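/- arXiv:1106.3498 — 2 statements merged into one kernel-verified Lean document; each statement's English description precedes it below -/
import Mathlib

section
/- Translation of a single AND gate into a clause is correct for unit propagation: let φ be a CNF formula, let w₁,…,w_m, u be literals, and let ψ = φ ∪ {{¬w₁,…,¬w_m, u}} where u's variable does not occur in φ. Then u is derivable from ψ by unit propagation if and only if all of w₁,…,w_m are derivable from φ by unit propagation. -/
/-- A literal is a propositional variable paired with a polarity. -/
abbrev Lit (V : Type*) := V × Bool

/-- The complement of a literal. -/
def Lit.neg {V : Type*} (l : Lit V) : Lit V := (l.1, !l.2)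

/-- A clause is a finite set of literals. -/
abbrev Clause (V : Type*) := Finset (Lit V)

/-- A CNF formula is a finite set of clauses. -/
abbrev CNF (V : Type*) := Finset (Clause V)

/-- A literal is true under a complete assignment. -/
def litTrue {V : Type*} (A : V → Bool) (l : Lit V) : Prop := A l.1 = l.2

/-- A clause is satisfied if some literal in it is true. -/
def satClause {V : Type*} (A : V → Bool) (c : Clause V) : Prop := ∃ l ∈ c, litTrue A l

/-- A CNF formula is satisfied if every clause is satisfied. -/
def satCNF {V : Type*} (A : V → Bool) (φ : CNF V) : Prop := ∀ c ∈ φ, satClause A c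

/-- Derivability of a literal by unit propagation: `w` is derivable if some clause
`{l₁,…,l_q,w} ∈ φ` has the complements of all the `lᵢ` derivable. -/
inductive UPDeriv {V : Type*} (φ : CNF V) : Lit V → Prop
  | step (c : Clause V) (w : Lit V) (hc : c ∈ φ) (hw : w ∈ c)
      (h : ∀ l ∈ c, l ≠ w → UPDeriv φ (Lit.neg l)) : UPDeriv φ w

/-!
The fresh variable `u` occurs only in the gate clause, and only positively, so `¬u` is not
derivable. Hence the gate clause can fire only to produce `u`, which requires every `wᵢ`; and a
derivation of any other literal never uses it, so it is already a derivation from `φ`.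
-/

@[simp] theorem Lit.neg_neg {V : Type*} (l : Lit V) : l.neg.neg = l := by
  simp [Lit.neg]

namespace UPDeriv

variable {V : Type*} {φ ψ : CNF V} {l x : Lit V}

theorem mono (hsub : φ ⊆ ψ) (hd : UPDeriv φ l) : UPDeriv ψ l := by
  induction hd with
  | step c w hc hw _ ih => exact .step c w (hsub hc) hw ih

theorem exists_mem_clause (hd : UPDeriv φ l) : ∃ c ∈ φ, l ∈ c := by
  obtain ⟨c, _, hc, hw, _⟩ := hd
  exact ⟨c, hc, hw⟩

variable [DecidableEq V] {c : Clause V}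

theorem neg_of_insert_of_forall_not_mem (hφ : ∀ c' ∈ φ, x ∉ c')
    (hd : UPDeriv (insert c φ) x) : ∀ l ∈ c, l ≠ x → UPDeriv (insert c φ) l.neg := by
  obtain ⟨c', _, hc', hx, hprem⟩ := hd
  rcases Finset.mem_insert.mp hc' with rfl | hc'φ
  · exact hprem
  · exact absurd hx (hφ c' hc'φ)

theorem of_insert (hx : x ∈ c) (hφ : ∀ c' ∈ φ, x.neg ∉ c') (hc : x.neg ∉ c)
    (hd : UPDeriv (insert c φ) l) (hlx : l ≠ x) : UPDeriv φ l := by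
  have hxneg : ¬ UPDeriv (insert c φ) x.neg := fun h => by
    obtain ⟨c', hc', hmem⟩ := h.exists_mem_clause
    rcases Finset.mem_insert.mp hc' with rfl | hc'φ
    · exact hc hmem
    · exact hφ c' hc'φ hmem
  induction hd with
  | step c' w hc' hw hprem ih =>
    rcases Finset.mem_insert.mp hc' with rfl | hc'φ
    · exact absurd (hprem x hx hlx.symm) hxneg
    · refine .step c' w hc'φ hw fun l' hl' hl'w => ih l' hl' hl'w ?_
      rintro rfl
      exact hφ c' hc'φ (by rwa [Lit.neg_neg])

end UPDeriv

/-- Translation of an AND gate into a clause is correct for unit propagation: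
with u fresh, u is derivable from φ ∪ {{¬w₁,…,¬w_m,u}} iff all wᵢ are derivable from φ. -/
theorem and_gate_correct {V : Type*} [DecidableEq V] (φ : CNF V)
    (ws : Finset (Lit V)) (u : V)
    (hfresh : ∀ c ∈ φ, ∀ l ∈ c, l.1 ≠ u) (hws : ∀ w ∈ ws, w.1 ≠ u) :
    UPDeriv (insert (ws.image Lit.neg ∪ {((u, true) : Lit V)}) φ) (u, true) ↔
      ∀ w ∈ ws, UPDeriv φ w := by
  set gate : Clause V := ws.image Lit.neg ∪ {((u, true) : Lit V)}
  have hu_mem : ((u, true) : Lit V) ∈ gate := by simp [gate]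
  have hneg_mem {w : Lit V} (hw : w ∈ ws) : w.neg ∈ gate :=
    Finset.mem_union_left _ (Finset.mem_image_of_mem _ hw)
  have hws_ne {w : Lit V} (hw : w ∈ ws) (b : Bool) : w ≠ (u, b) ∧ w.neg ≠ (u, b) :=
    ⟨fun h => hws w hw (congrArg Prod.fst h), fun h => hws w hw (congrArg Prod.fst h)⟩
  have hφ (b : Bool) : ∀ c ∈ φ, ((u, b) : Lit V) ∉ c := fun c hc hmem => hfresh c hc _ hmem rfl
  have hgate : ((u, false) : Lit V) ∉ gate := by
    simp only [gate, Finset.mem_union, Finset.mem_image, Finset.mem_singleton, not_or]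
    exact ⟨fun ⟨w, hw, hwu⟩ => (hws_ne hw false).2 hwu, by simp⟩
  constructor
  · intro h w hw
    have hw' := h.neg_of_insert_of_forall_not_mem (hφ true) _ (hneg_mem hw) (hws_ne hw true).2
    rw [Lit.neg_neg] at hw'
    exact hw'.of_insert hu_mem (hφ false) hgate (hws_ne hw true).1
  · intro h
    refine .step gate _ (Finset.mem_insert_self _ _) hu_mem fun l hl hlu => ?_
    obtain ⟨w, hw, rfl⟩ :=
      Finset.mem_image.mp ((Finset.mem_union.mp hl).resolve_right (Finset.notMem_singleton.mpr hlu))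
    rw [Lit.neg_neg]
    exact (h w hw).mono (Finset.subset_insert _ _)
end

section
/- Every monotone Boolean function f : {0,1}ⁿ → {0,1} with f not identically 1 on the minimal element is computable by unit propagation: there exists a CNF formula φ over variables v₁,…,v_n and auxiliary variables, and an output variable s, such that for every consistent partial assignment I on {v₁,…,v_n}, unit propagation on φ|_I derives no complementary pair, and derives s if and only if f(I_B) = 1, where I_B ∈ {0,1}^{2n} is the Boolean representation of I and f is regarded as a monotone function on {0,1}^{2n}. -/
/-- `φ|_I` : the formula `φ` together with the unit clauses `{l}` for `l ∈ I`. -/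
def restrict {V : Type*} [DecidableEq V] (φ : CNF V) (I : Finset (Lit V)) : CNF V :=
  φ ∪ I.image (fun l => ({l} : Clause V))

/-- A set of literals is consistent if no variable occurs in both polarities. -/
def Consistent {V : Type*} (I : Finset (Lit V)) : Prop := ∀ l ∈ I, Lit.neg l ∉ I

/-!
Encode the monotone DNF of `f` (one term per true point, read as the set of literals it
makes true) by a CNF with a clause `¬t₁ ∨ … ∨ ¬t_k ∨ zₜ` for each term `t`, with a fresh
variable `zₜ`, and a clause `¬zₜ ∨ s`. Unit propagation on this formula restricted to `I`
derives exactly the literals of `I`, the `zₜ` with `t ⊆ I`, and `s` when some term lies in `I`: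
the auxiliary variables occur positively only as clause heads, so the negation of none of them
is ever derived. Monotonicity of `f` turns "some true point lies below `I_B`" into `f(I_B) = 1`.
-/

section UPDeriv

variable {V : Type*}

theorem UPDeriv.of_singleton_mem {φ : CNF V} {l : Lit V} (h : {l} ∈ φ) : UPDeriv φ l :=
  .step {l} l h (Finset.mem_singleton_self l) fun _ hl' hne =>
    absurd (Finset.mem_singleton.mp hl') hne

variable [DecidableEq V]

theorem mem_restrict {φ : CNF V} {I : Finset (Lit V)} {c : Clause V} :
    c ∈ restrict φ I ↔ c ∈ φ ∨ ∃ l ∈ I, {l} = c := by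
  simp only [restrict, Finset.mem_union, Finset.mem_image]

theorem UPDeriv.of_mem_restrict {φ : CNF V} {I : Finset (Lit V)} {l : Lit V} (h : l ∈ I) :
    UPDeriv (restrict φ I) l :=
  .of_singleton_mem (mem_restrict.mpr (.inr ⟨l, h, rfl⟩))

end UPDeriv

namespace DNFEncoding

variable {V : Type*}

/-- Variables of the encoding: the inputs, `some t` for the term `t`, and the output `none`. -/
abbrev Var (V : Type*) := V ⊕ Option (Finset (Lit V))

section Encoding

variable [DecidableEq V]

-- Instance search for `DecidableEq (Clause (Var V))` exceeds its size limit without this.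
instance : DecidableEq (Var V) := inferInstanceAs (DecidableEq (V ⊕ Option (Finset (Lit V))))

def termClause (t : Finset (Lit V)) : Clause (Var V) :=
  insert (Sum.inr (some t), true) (t.image fun l => (Sum.inl l.1, !l.2))

def outputClause (t : Finset (Lit V)) : Clause (Var V) :=
  {(Sum.inr (some t), false), (Sum.inr none, true)}

def cnf (D : Finset (Finset (Lit V))) : CNF (Var V) :=
  D.image termClause ∪ D.image outputClause

def liftInput (I : Finset (Lit V)) : Finset (Lit (Var V)) :=
  I.image fun l => (Sum.inl l.1, l.2)

@[simp]
theorem mem_liftInput {I : Finset (Lit V)} {L : Lit (Var V)} :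
    L ∈ liftInput I ↔ ∃ l ∈ I, (Sum.inl l.1, l.2) = L :=
  Finset.mem_image

end Encoding

def Derivable (D : Finset (Finset (Lit V))) (I : Finset (Lit V)) : Lit (Var V) → Prop
  | (Sum.inl v, b) => (v, b) ∈ I
  | (Sum.inr (some t), b) => b = true ∧ t ∈ D ∧ t ⊆ I
  | (Sum.inr none, b) => b = true ∧ ∃ t ∈ D, t ⊆ I

variable {D : Finset (Finset (Lit V))} {I : Finset (Lit V)}

theorem not_derivable_and_neg (hI : Consistent I) (L : Lit (Var V)) :
    ¬ (Derivable D I L ∧ Derivable D I L.neg) := by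
  rintro ⟨h, hneg⟩
  match L, h, hneg with
  | (Sum.inl v, b), h, hneg => exact hI (v, b) h hneg
  | (Sum.inr (some _), _), ⟨rfl, _⟩, ⟨hneg, _⟩ => exact Bool.noConfusion hneg
  | (Sum.inr none, _), ⟨rfl, _⟩, ⟨hneg, _⟩ => exact Bool.noConfusion hneg

variable [DecidableEq V]

theorem derivable_of_upDeriv {L : Lit (Var V)}
    (h : UPDeriv (restrict (cnf D) (liftInput I)) L) : Derivable D I L := by
  induction h with
  | step c w hc hw _ ih =>
    rcases mem_restrict.mp hc with hc | ⟨l, hl, rfl⟩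
    · rcases Finset.mem_union.mp hc with hc | hc <;> obtain ⟨t, ht, rfl⟩ := Finset.mem_image.mp hc
      · rcases Finset.mem_insert.mp hw with rfl | hw
        · refine ⟨rfl, ht, fun l hl => ?_⟩
          simpa [Derivable, Lit.neg] using
            ih (Sum.inl l.1, !l.2) (Finset.mem_insert_of_mem (Finset.mem_image_of_mem _ hl))
              (by simp)
        · obtain ⟨l, -, rfl⟩ := Finset.mem_image.mp hw
          simpa [Derivable, Lit.neg] using ih _ (Finset.mem_insert_self _ _) (by simp)
      · simp only [outputClause, Finset.mem_insert, Finset.mem_singleton] at hw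
        rcases hw with rfl | rfl
        · simpa [Derivable, Lit.neg] using
            ih (Sum.inr none, true) (by simp [outputClause]) (by simp)
        · have hz := ih (Sum.inr (some t), false) (by simp [outputClause]) (by simp)
          simp only [Derivable, Lit.neg, Bool.not_false, true_and] at hz
          exact ⟨rfl, t, hz⟩
    · obtain ⟨l, hlI, rfl⟩ := mem_liftInput.mp hl
      rw [Finset.mem_singleton.mp hw]
      exact hlI

theorem upDeriv_some_of_subset {t : Finset (Lit V)} (ht : t ∈ D) (hsub : t ⊆ I) :
    UPDeriv (restrict (cnf D) (liftInput I)) (Sum.inr (some t), true) := by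
  refine .step (termClause t) _ (mem_restrict.mpr (.inl ?_)) (Finset.mem_insert_self _ _) ?_
  · exact Finset.mem_union_left _ (Finset.mem_image_of_mem _ ht)
  · intro l hl hne
    obtain ⟨l, hlt, rfl⟩ := Finset.mem_image.mp ((Finset.mem_insert.mp hl).resolve_left hne)
    exact .of_mem_restrict (mem_liftInput.mpr ⟨l, hsub hlt, by simp [Lit.neg]⟩)

theorem upDeriv_of_derivable {L : Lit (Var V)} (h : Derivable D I L) :
    UPDeriv (restrict (cnf D) (liftInput I)) L := by
  match L, h with
  | (Sum.inl v, b), h => exact .of_mem_restrict (mem_liftInput.mpr ⟨(v, b), h, rfl⟩)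
  | (Sum.inr (some t), _), ⟨rfl, ht, hsub⟩ => exact upDeriv_some_of_subset ht hsub
  | (Sum.inr none, _), ⟨rfl, t, ht, hsub⟩ =>
    refine .step (outputClause t) _ (mem_restrict.mpr (.inl ?_)) (by simp [outputClause]) ?_
    · exact Finset.mem_union_right _ (Finset.mem_image_of_mem _ ht)
    · intro l hl hne
      simp only [outputClause, Finset.mem_insert, Finset.mem_singleton] at hl
      rcases hl with rfl | rfl
      · exact upDeriv_some_of_subset ht hsub
      · exact absurd rfl hne

theorem upDeriv_iff_derivable {L : Lit (Var V)} :
    UPDeriv (restrict (cnf D) (liftInput I)) L ↔ Derivable D I L :=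
  ⟨derivable_of_upDeriv, upDeriv_of_derivable⟩

end DNFEncoding

theorem exists_subset_iff_of_monotone {V : Type*} [DecidableEq V] {f : (Lit V → Bool) → Bool}
    (hmono : ∀ a b : Lit V → Bool, (∀ l, a l ≤ b l) → f a ≤ f b) (I : Finset (Lit V)) :
    (∃ t : Finset (Lit V), f (fun l => decide (l ∈ t)) = true ∧ t ⊆ I) ↔
      f (fun l => decide (l ∈ I)) = true := by
  refine ⟨fun ⟨t, ht, hsub⟩ => ?_, fun h => ⟨I, h, subset_rfl⟩⟩
  have hle := hmono (fun l => decide (l ∈ t)) (fun l => decide (l ∈ I)) fun l =>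
    Bool.le_iff_imp.mpr fun hl => decide_eq_true (hsub (of_decide_eq_true hl))
  exact le_antisymm (Bool.le_true _) (ht ▸ hle)

theorem monotone_function_propagatable_general (n : ℕ)
    (f : (Lit (Fin n) → Bool) → Bool)
    (hmono : ∀ a b : Lit (Fin n) → Bool, (∀ l, a l ≤ b l) → f a ≤ f b) :
    ∃ (W : Type) (_ : DecidableEq W) (φ : CNF (Fin n ⊕ W)) (s : Fin n ⊕ W),
      ∀ I : Finset (Lit (Fin n)), Consistent I →
        (¬ ∃ l : Lit (Fin n ⊕ W),
            UPDeriv (restrict φ (I.image (fun l => ((Sum.inl l.1 : Fin n ⊕ W), l.2)))) l ∧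
            UPDeriv (restrict φ (I.image (fun l => ((Sum.inl l.1 : Fin n ⊕ W), l.2))))
              (Lit.neg l)) ∧
        (UPDeriv (restrict φ (I.image (fun l => ((Sum.inl l.1 : Fin n ⊕ W), l.2))))
            (s, true) ↔
          f (fun l => decide (l ∈ I)) = true) := by
  let D : Finset (Finset (Lit (Fin n))) := {t | f (fun l => decide (l ∈ t)) = true}
  refine ⟨_, inferInstance, DNFEncoding.cnf D, Sum.inr none, fun I hI => ⟨?_, ?_⟩⟩
  · rintro ⟨L, h, hneg⟩
    exact DNFEncoding.not_derivable_and_neg hI L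
      ⟨DNFEncoding.derivable_of_upDeriv h, DNFEncoding.derivable_of_upDeriv hneg⟩
  · refine DNFEncoding.upDeriv_iff_derivable.trans ?_
    simpa [DNFEncoding.Derivable, D] using exists_subset_iff_of_monotone hmono I

/-- Every monotone Boolean function on {0,1}^{2n} (inputs indexed by the 2n literals
over v₁,…,v_n) that is false on the minimal element is computable by unit propagation:
there is a CNF formula over the input variables and auxiliary variables, with an
output variable s, such that for every consistent partial assignment I, unit
propagation on φ|_I derives no complementary pair and derives s iff f(I_B) = 1. -/
theorem monotone_function_propagatable (n : ℕ)
    (f : (Lit (Fin n) → Bool) → Bool)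
    (hmono : ∀ a b : Lit (Fin n) → Bool, (∀ l, a l ≤ b l) → f a ≤ f b)
    (hbot : f (fun _ => false) = false) :
    ∃ (W : Type) (_ : DecidableEq W) (φ : CNF (Fin n ⊕ W)) (s : Fin n ⊕ W),
      ∀ I : Finset (Lit (Fin n)), Consistent I →
        (¬ ∃ l : Lit (Fin n ⊕ W),
            UPDeriv (restrict φ (I.image (fun l => ((Sum.inl l.1 : Fin n ⊕ W), l.2)))) l ∧
            UPDeriv (restrict φ (I.image (fun l => ((Sum.inl l.1 : Fin n ⊕ W), l.2))))
              (Lit.neg l)) ∧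
        (UPDeriv (restrict φ (I.image (fun l => ((Sum.inl l.1 : Fin n ⊕ W), l.2))))
            (s, true) ↔
          f (fun l => decide (l ∈ I)) = true) :=
  monotone_function_propagatable_general n f hmono
end
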